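/- Let T = {(u,w) ∈ ℂ² : t(u,w) = 0} near (1,0), where t(u,w) = 1 + |w·g(u)|² − |u|² − |w|² and g(u) = (1/3)·exp(−(1−u)^{−1/4}). The complex Hessian (Levi form) ∂∂̄t of t is negative definite at all points in a sufficiently small neighborhood of (u,w) = (1,0); hence the hypersurface T is strictly pseudoconvex near (1,0). -/

import Mathlib

/-- `g(u) = (1/3)·exp(−(1−u)^{−1/4})` on the slit plane `ℂ \ [1,∞)`. -/
noncomputable def gSlit (u : ℂ) : ℂ :=
  (1 / 3 : ℂ) * Complex.exp (-((1 - u) ^ ((-1 / 4 : ℂ))))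

private lemma quad_neg_aux (A B G D W re : ℝ) (hA0 : 0 ≤ A) (hB0 : 0 ≤ B)
    (hG0 : 0 ≤ G) (hD0 : 0 ≤ D) (hW0 : 0 ≤ W)
    (hre : re ≤ W * D * G * A * B) (hWD : W * D ≤ 1/2) (hG : G ≤ 1/2)
    (hAB : 0 < A ^ 2 + B ^ 2) :
    (W ^ 2 * D ^ 2 - 1) * A ^ 2 + (G ^ 2 - 1) * B ^ 2 + 2 * re < 0 := by
  have hWD0 : 0 ≤ W * D := mul_nonneg hW0 hD0
  have hP2 : W ^ 2 * D ^ 2 ≤ 1/4 := by nlinarith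
  have hG2 : G ^ 2 ≤ 1/4 := by nlinarith
  have hWDG : W * D * G ≤ 1/4 := by nlinarith
  have hcross : 2 * (W * D * G * A * B) ≤ (1/4) * (A ^ 2 + B ^ 2) := by
    nlinarith [mul_nonneg hA0 hB0, sq_nonneg (A - B), mul_nonneg hWD0 hG0]
  nlinarith [sq_nonneg A, sq_nonneg B]

/-- the complex Hessian (Levi form) of
`t(u,w) = 1 + |w·g(u)|² − |u|² − |w|²`, namely the Hermitian form with matrix
`[[|w|²|g'(u)|² − 1, w·g'(u)·conj(g(u))], [conj(·), |g(u)|² − 1]]`, is negative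
definite at every point of the slit domain sufficiently close to `(1,0)`; hence
the hypersurface `T = {t = 0}` is strictly pseudoconvex near `(1,0)`. -/
theorem stmt16 :
    ∃ δ > (0 : ℝ), ∀ u w : ℂ, (∀ r : ℝ, 1 ≤ r → u ≠ (r : ℂ)) →
      ‖u - 1‖ < δ → ‖w‖ < δ →
      ∀ a b : ℂ, ¬(a = 0 ∧ b = 0) →
        ((‖w‖) ^ 2 * (‖deriv gSlit u‖) ^ 2 - 1) * (‖a‖) ^ 2
          + ((‖gSlit u‖) ^ 2 - 1) * (‖b‖) ^ 2
          + 2 * (w * deriv gSlit u * (starRingEnd ℂ) (gSlit u) * a * (starRingEnd ℂ) b).re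
          < 0 := by
  refine ⟨((10 : ℝ) ^ 24)⁻¹, by positivity, ?_⟩
  intro u w hslit hu hw a b hab
  set v : ℂ := 1 - u with hv
  -- v ≠ 0
  have hu1 : u ≠ 1 := by simpa using hslit 1 le_rfl
  have hv0 : v ≠ 0 := by
    simp only [hv, sub_ne_zero]
    exact fun h => hu1 h.symm
  have hvslit : v ∈ Complex.slitPlane := by
    by_contra h
    simp only [Complex.mem_slitPlane_iff, not_or, not_lt, ne_eq, not_not] at h
    obtain ⟨hre, him⟩ := h
    have hure : (1 : ℝ) ≤ u.re := by
      have : (1 : ℂ).re - u.re ≤ 0 := by simpa [hv, Complex.sub_re] using hre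
      simpa using this
    refine hslit u.re hure ?_
    apply Complex.ext <;> simp
    have : (1 : ℂ).im - u.im = 0 := by simpa [hv, Complex.sub_im] using him
    simpa using this.symm
  set r : ℝ := ‖v‖ with hrdef
  have hr : 0 < r := norm_pos_iff.mpr hv0
  have hru : ‖u - 1‖ = r := by
    rw [hrdef, hv, norm_sub_rev]
  rw [hru] at hu
  set s : ℝ := r ^ (-(1/4) : ℝ) with hsdef
  have hs : 0 < s := Real.rpow_pos_of_pos hr _
  -- s > 10^6
  have hs4 : s ^ (4:ℕ) = r⁻¹ := by
    rw [hsdef, ← Real.rpow_natCast (r ^ (-(1/4):ℝ)) 4, ← Real.rpow_mul hr.le]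
    norm_num [Real.rpow_neg_one]
  have hs6 : (10 : ℝ) ^ 6 < s := by
    have h1 : ((10:ℝ) ^ 6) ^ (4:ℕ) < s ^ (4:ℕ) := by
      rw [hs4]
      rw [lt_inv_comm₀ (by positivity) hr]
      calc r < ((10:ℝ) ^ 24)⁻¹ := hu
        _ = (((10:ℝ) ^ 6) ^ (4:ℕ))⁻¹ := by norm_num
    exact lt_of_pow_lt_pow_left₀ 4 hs.le h1
  -- real part of (1-u)^(-1/4)
  have hres : s / 2 ≤ (v ^ ((-1/4 : ℂ))).re := by
    rw [Complex.cpow_def_of_ne_zero hv0, Complex.exp_re]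
    have hcre : ((-1/4 : ℂ)).re = -(1/4) := by norm_num
    have hcim : ((-1/4 : ℂ)).im = 0 := by norm_num
    have hre_eq : (Complex.log v * (-1/4 : ℂ)).re = Real.log r * (-(1/4)) := by
      rw [Complex.mul_re, hcre, hcim, Complex.log_re, Complex.log_im, ← hrdef]; ring
    have him_eq : (Complex.log v * (-1/4 : ℂ)).im = -(1/4) * Complex.arg v := by
      rw [Complex.mul_im, hcre, hcim, Complex.log_re, Complex.log_im]; ring
    rw [hre_eq, him_eq, ← Real.rpow_def_of_pos hr, ← hsdef]
    have harg : |(-(1/4) * Complex.arg v)| ≤ 1 := by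
      rw [abs_mul]
      have h1 := Complex.abs_arg_le_pi v
      have h2 := Real.pi_le_four
      have h3 : |(-(1/4) : ℝ)| = 1/4 := by norm_num
      rw [h3]
      linarith [abs_nonneg (Complex.arg v)]
    have hcos : (1:ℝ)/2 ≤ Real.cos (-(1/4) * Complex.arg v) := by
      have h4 := Real.one_sub_sq_div_two_le_cos (x := -(1/4) * Complex.arg v)
      nlinarith [sq_abs (-(1/4) * Complex.arg v), abs_nonneg (-(1/4) * Complex.arg v)]
    nlinarith
  -- bound on |g(u)|
  have hgabs : ‖gSlit u‖ ≤ (1/3) * Real.exp (-(s/2)) := by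
    have heq : ‖gSlit u‖ = (1/3) * Real.exp (-(v ^ ((-1/4 : ℂ))).re) := by
      rw [gSlit, norm_mul, Complex.norm_exp, ← hv, Complex.neg_re]
      norm_num
    rw [heq]
    have := Real.exp_le_exp.mpr (neg_le_neg hres)
    linarith
  have hghalf : ‖gSlit u‖ ≤ 1/2 := by
    have h1 : Real.exp (-(s/2)) ≤ 1 := Real.exp_le_one_iff.mpr (by linarith)
    calc ‖gSlit u‖ ≤ (1/3) * Real.exp (-(s/2)) := hgabs
      _ ≤ (1/3) * 1 := by linarith
      _ ≤ 1/2 := by norm_num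
  -- derivative of gSlit
  have h1 : HasDerivAt (fun x : ℂ => 1 - x) (-1) u := by
    simpa using (hasDerivAt_id u).const_sub 1
  have h2 : HasDerivAt (fun x : ℂ => (1 - x) ^ ((-1/4 : ℂ)))
      ((-1/4 : ℂ) * v ^ ((-1/4 : ℂ) - 1) * (-1)) u := h1.cpow_const hvslit
  have h4 : HasDerivAt gSlit
      ((1/3 : ℂ) * (Complex.exp (-(v ^ ((-1/4 : ℂ)))) *
        (-((-1/4 : ℂ) * v ^ ((-1/4 : ℂ) - 1) * (-1))))) u := by
    exact ((h2.neg.cexp).const_mul (1/3 : ℂ))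
  have hderiv : deriv gSlit u = gSlit u * (-((-1/4 : ℂ) * v ^ ((-1/4 : ℂ) - 1) * (-1))) := by
    rw [h4.deriv, gSlit, ← hv]; ring
  -- |v ^ (-1/4 - 1)| = s ^ 5
  have hvp : ‖v ^ ((-1/4 : ℂ) - 1)‖ = s ^ (5:ℕ) := by
    have hre' : ((-1/4 : ℂ) - 1).re = -(5/4) := by norm_num
    have him' : ((-1/4 : ℂ) - 1).im = 0 := by norm_num
    rw [Complex.norm_cpow_of_ne_zero hv0, hre', him', mul_zero, Real.exp_zero, div_one]
    rw [← hrdef]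
    rw [hsdef, ← Real.rpow_natCast (r ^ (-(1/4):ℝ)) 5, ← Real.rpow_mul hr.le]
    norm_num
  have habsd : ‖deriv gSlit u‖ = ‖gSlit u‖ * ((1/4) * s ^ (5:ℕ)) := by
    rw [hderiv]
    rw [norm_mul]
    congr 1
    have : ‖-((-1/4 : ℂ) * v ^ ((-1/4 : ℂ) - 1) * (-1))‖
        = ‖(-1/4 : ℂ)‖ * ‖v ^ ((-1/4 : ℂ) - 1)‖ := by
      rw [norm_neg, norm_mul, norm_mul, norm_neg, norm_one, mul_one]
    have hquarter : ‖(-1/4 : ℂ)‖ = 1/4 := by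
      rw [(by norm_num : ((-1/4 : ℂ)) = ((-(1/4) : ℝ) : ℂ)), Complex.norm_real]
      norm_num [Real.norm_eq_abs]
    rw [this, hvp, hquarter]
  -- key exponential bound : s^6 * exp(-(s/2)) ≤ 12^6
  have hexp : s ^ (6:ℕ) * Real.exp (-(s/2)) ≤ 12 ^ 6 := by
    have hA : (s/12) ^ (6:ℕ) ≤ Real.exp (s/2) := by
      have h0 : s/12 ≤ Real.exp (s/12) := by
        have := Real.add_one_le_exp (s/12); linarith
      calc (s/12) ^ (6:ℕ) ≤ (Real.exp (s/12)) ^ (6:ℕ) :=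
            pow_le_pow_left₀ (by positivity) h0 6
        _ = Real.exp ((6:ℕ) * (s/12)) := (Real.exp_nat_mul _ 6).symm
        _ = Real.exp (s/2) := by push_cast; ring_nf
    rw [Real.exp_neg]
    rw [mul_inv_le_iff₀ (Real.exp_pos _)]
    calc s ^ (6:ℕ) = (s/12) ^ (6:ℕ) * 12 ^ 6 := by ring
      _ ≤ Real.exp (s/2) * 12 ^ 6 := by nlinarith [pow_nonneg (by positivity : (0:ℝ) ≤ s/12) 6]
      _ = 12 ^ 6 * Real.exp (s/2) := by ring
  -- |deriv| ≤ 1/2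
  have hdhalf : ‖deriv gSlit u‖ ≤ 1/2 := by
    rw [habsd]
    have h5 : ‖gSlit u‖ * ((1/4) * s ^ (5:ℕ))
        ≤ (1/12) * (s ^ (5:ℕ) * Real.exp (-(s/2))) := by
      have := mul_le_mul_of_nonneg_right hgabs (by positivity : (0:ℝ) ≤ (1/4) * s ^ (5:ℕ))
      calc ‖gSlit u‖ * ((1/4) * s ^ (5:ℕ))
          ≤ (1/3) * Real.exp (-(s/2)) * ((1/4) * s ^ (5:ℕ)) := this
        _ = (1/12) * (s ^ (5:ℕ) * Real.exp (-(s/2))) := by ring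
    have h6 : s ^ (5:ℕ) * Real.exp (-(s/2)) ≤ 12 ^ 6 / s := by
      rw [le_div_iff₀ hs]
      calc s ^ (5:ℕ) * Real.exp (-(s/2)) * s = s ^ (6:ℕ) * Real.exp (-(s/2)) := by ring
        _ ≤ 12 ^ 6 := hexp
    have h7 : (12:ℝ) ^ 6 / s ≤ 12 ^ 6 / 10 ^ 6 :=
      div_le_div_of_nonneg_left (by norm_num) (by positivity) hs6.le
    calc ‖gSlit u‖ * ((1/4) * s ^ (5:ℕ))
        ≤ (1/12) * (s ^ (5:ℕ) * Real.exp (-(s/2))) := h5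
      _ ≤ (1/12) * (12 ^ 6 / 10 ^ 6) := by linarith
      _ ≤ 1/2 := by norm_num
  have hw1 : ‖w‖ ≤ 1 := by
    calc ‖w‖ ≤ ((10:ℝ) ^ 24)⁻¹ := hw.le
      _ ≤ 1 := by norm_num
  -- final algebra
  set A := ‖a‖
  set B := ‖b‖
  set G := ‖gSlit u‖
  set D := ‖deriv gSlit u‖
  set W := ‖w‖
  have hA0 : 0 ≤ A := norm_nonneg a
  have hB0 : 0 ≤ B := norm_nonneg b
  have hG0 : 0 ≤ G := norm_nonneg _
  have hD0 : 0 ≤ D := norm_nonneg _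
  have hW0 : 0 ≤ W := norm_nonneg w
  have hre : (w * deriv gSlit u * (starRingEnd ℂ) (gSlit u) * a * (starRingEnd ℂ) b).re
      ≤ W * D * G * A * B := by
    calc (w * deriv gSlit u * (starRingEnd ℂ) (gSlit u) * a * (starRingEnd ℂ) b).re
        ≤ ‖w * deriv gSlit u * (starRingEnd ℂ) (gSlit u) * a * (starRingEnd ℂ) b‖ :=
          Complex.re_le_norm _
      _ = W * D * G * A * B := by
          simp [norm_mul, Complex.norm_conj]; rfl
  have hABpos : 0 < A ^ 2 + B ^ 2 := by
    rcases not_and_or.mp hab with h | h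
    · have : 0 < A := norm_pos_iff.mpr h
      positivity
    · have : 0 < B := norm_pos_iff.mpr h
      positivity
  exact quad_neg_aux A B G D W _ hA0 hB0 hG0 hD0 hW0 hre
    (by calc W * D ≤ 1 * (1/2) := mul_le_mul hw1 hdhalf hD0 zero_le_one
          _ = 1/2 := by norm_num)
    hghalf hABpos
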